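/- arXiv:0710.4945 — 3 statements merged into one kernel-verified Lean document; each statement's English description precedes it below -/
import Mathlib

section
/- Let M₁, M₂ be homogeneous K-linear subspaces of R = K[x₁,…,x_N] with R = M₁ ⊕ M₂. For i = 1,2 let 𝒟_i be a cone decomposition of M_i that is d_i-standard for some d_i. Then max{deg 𝒟₁, deg 𝒟₂} = max{deg 𝒟₁⁺, deg 𝒟₂⁺}. -/
/-!
Together the two decompositions form a cone decomposition of `R`, and the generators
`x^(w+γ)·h` of all its cones form a homogeneous basis of `R`. Counting basis elements of
degree `e` gives `multichoose N e = ∑ [deg C ≤ e] · multichoose #y (e - deg C)` over the cones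
`C = C(w,y,h)`. Once `e` exceeds the degree of every cone with `y ≠ ∅`, the terms of those cones
and the left-hand side are values of Hilbert polynomials, so the number of cones with `y = ∅`
of degree `e` is a polynomial in `e`. It vanishes for large `e`, hence identically: every cone
with `y = ∅` has smaller degree than some cone with `y ≠ ∅`.
-/
open MvPolynomial
open scoped Classical

/-- A cone triple `(w, y, h)`: a multi-index `w`, a set `y` of variables, and a
polynomial `h`. -/
abbrev ConeTriple (N : ℕ) (K : Type*) [Field K] :=
  (Fin N →₀ ℕ) × Finset (Fin N) × MvPolynomial (Fin N) K

/-- The degree `|w| + deg h` of a cone triple `(w, y, h)`. -/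
def coneDeg {N : ℕ} {K : Type*} [Field K] (p : ConeTriple N K) : ℕ :=
  (∑ i, p.1 i) + p.2.2.totalDegree

/-- The cone `C(w,y,h)`: the `K`-linear span of all `x^(w+γ)·h` with `γ` supported
on `y`. -/
noncomputable def cone {N : ℕ} {K : Type*} [Field K] (p : ConeTriple N K) :
    Submodule K (MvPolynomial (Fin N) K) :=
  Submodule.span K {q | ∃ γ : Fin N →₀ ℕ, (∀ i ∉ p.2.1, γ i = 0) ∧
    q = monomial (p.1 + γ) 1 * p.2.2}

/-- A homogeneous `K`-linear subspace of the polynomial ring. -/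
def IsHomogeneousSubspace {N : ℕ} {K : Type*} [Field K]
    (M : Submodule K (MvPolynomial (Fin N) K)) : Prop :=
  ∀ f ∈ M, ∀ e : ℕ, homogeneousComponent e f ∈ M

/-- `𝒟` is a cone decomposition of `M`: each triple consists of a nonzero homogeneous
`h`, each cone is contained in `M`, and `M` is the internal direct sum of the cones. -/
def IsConeDecomp {N : ℕ} {K : Type*} [Field K] (𝒟 : Finset (ConeTriple N K))
    (M : Submodule K (MvPolynomial (Fin N) K)) : Prop :=
  (∀ p ∈ 𝒟, p.2.2 ≠ 0 ∧ ∃ e : ℕ, p.2.2.IsHomogeneous e) ∧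
  (∀ p ∈ 𝒟, cone p ≤ M) ∧
  M = (⨆ p ∈ 𝒟, cone p) ∧
  ∀ p ∈ 𝒟, Disjoint (cone p) (⨆ q ∈ 𝒟.erase p, cone q)

/-- `𝒟` is `d`-standard. -/
def IsStandardDecomp {N : ℕ} {K : Type*} [Field K] (d : ℕ)
    (𝒟 : Finset (ConeTriple N K)) : Prop :=
  (∀ p ∈ 𝒟, p.2.1.Nonempty → d ≤ coneDeg p) ∧
  ∀ p ∈ 𝒟, p.2.1.Nonempty → ∀ d', d ≤ d' → d' ≤ coneDeg p →
    ∃ q ∈ 𝒟, q.2.1.Nonempty ∧ coneDeg q = d' ∧ p.2.1.card ≤ q.2.1.card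

/-- The degree of a cone decomposition, as an element of `ℕ ∪ {−∞}`. -/
def decompDeg {N : ℕ} {K : Type*} [Field K] (𝒟 : Finset (ConeTriple N K)) :
    WithBot ℕ :=
  (𝒟.image coneDeg).max

section HilbertPolynomial

open Finset Polynomial

theorem Polynomial.preHilbertPoly_eval_eq_multichoose {F : Type*} [Field F] [CharZero F]
    {s c e : ℕ} (hs : 0 < s) (hce : c ≤ e) :
    (preHilbertPoly F (s - 1) c).eval (e : F) = s.multichoose (e - c) := by
  rw [preHilbertPoly_eq_choose_sub_add F _ hce, Nat.multichoose_eq, ← Nat.choose_symm_add,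
    show s + (e - c) - 1 = e - c + (s - 1) by omega]

theorem Nat.multichoose_zero_left (m : ℕ) : Nat.multichoose 0 m = if m = 0 then 1 else 0 := by
  cases m <;> simp [Nat.multichoose_zero_succ]

theorem exists_lt_of_multichoose_eq_sum {ι : Type*} {N : ℕ} (hN : 0 < N) (s : Finset ι)
    (k c : ι → ℕ)
    (h : ∀ e, N.multichoose e = ∑ i ∈ s, if c i ≤ e then (k i).multichoose (e - c i) else 0)
    {i₀ : ι} (hi₀ : i₀ ∈ s) (hk : k i₀ = 0) : ∃ j ∈ s, 0 < k j ∧ c i₀ < c j := by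
  by_contra! hle
  set P : ℚ[X] := preHilbertPoly ℚ (N - 1) 0 -
    ∑ j ∈ s with 0 < k j, preHilbertPoly ℚ (k j - 1) (c j)
  have hP : ∀ e, c i₀ ≤ e → P.eval (e : ℚ) = #{i ∈ s | k i = 0 ∧ c i = e} := by
    intro e he
    have hflat : ∑ i ∈ s with ¬ 0 < k i, (if c i ≤ e then (k i).multichoose (e - c i) else 0) =
        #{i ∈ s | k i = 0 ∧ c i = e} := by
      rw [card_filter, sum_filter]
      refine sum_congr rfl fun i _ => ?_
      by_cases hki : k i = 0
      · simp only [hki, Nat.multichoose_zero_left, true_and]; split_ifs <;> omega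
      · simp [hki]
    have hpos : ∀ j ∈ {j ∈ s | 0 < k j},
        (preHilbertPoly ℚ (k j - 1) (c j)).eval (e : ℚ) =
          ((if c j ≤ e then (k j).multichoose (e - c j) else 0 : ℕ) : ℚ) := fun j hj => by
      obtain ⟨hjs, hkj⟩ := mem_filter.mp hj
      rw [if_pos ((hle j hjs hkj).trans he), preHilbertPoly_eval_eq_multichoose hkj
        ((hle j hjs hkj).trans he)]
    have hcount := congrArg (fun n : ℕ => (n : ℚ)) (h e)
    rw [← sum_filter_add_sum_filter_not s (fun i => 0 < k i), hflat] at hcount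
    rw [Polynomial.eval_sub, eval_finsetSum, sum_congr rfl hpos,
      preHilbertPoly_eval_eq_multichoose hN (Nat.zero_le e), Nat.sub_zero, hcount]
    push_cast
    ring
  have hP0 : P = 0 := by
    refine P.eq_zero_of_infinite_isRoot (((Set.Ioi_infinite (max (c i₀) (s.sup c))).image
      Nat.cast_injective.injOn).mono ?_)
    rintro _ ⟨e, he, rfl⟩
    rw [Set.mem_Ioi, max_lt_iff] at he
    rw [Set.mem_ofPred_eq, IsRoot, hP e he.1.le, Nat.cast_eq_zero, card_eq_zero,
      filter_eq_empty_iff]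
    exact fun i hi hci => (le_sup hi).not_gt (hci.2 ▸ he.2)
  have hi₀_mem : i₀ ∈ {i ∈ s | k i = 0 ∧ c i = c i₀} := mem_filter.mpr ⟨hi₀, hk, rfl⟩
  have := hP (c i₀) le_rfl
  rw [hP0, Polynomial.eval_zero, eq_comm, Nat.cast_eq_zero, card_eq_zero] at this
  simp [this] at hi₀_mem

end HilbertPolynomial

namespace MvPolynomial

variable {σ R ι : Type*} [CommRing R]

theorem homogeneousSubmodule_eq_span_of_basis (b : Module.Basis ι R (MvPolynomial σ R))
    {d : ι → ℕ} (hb : ∀ i, (b i).IsHomogeneous (d i)) (e : ℕ) :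
    homogeneousSubmodule σ R e = Submodule.span R (Set.range fun i : {i // d i = e} => b i) := by
  refine le_antisymm (fun x hx => ?_) (Submodule.span_le.mpr ?_)
  · have hx' : homogeneousComponent e x ∈
        (Submodule.span R (Set.range b)).map (homogeneousComponent e) :=
      Submodule.mem_map_of_mem (b.mem_span x)
    rw [homogeneousComponent_of_mem hx, if_pos rfl, Submodule.map_span, ← Set.range_comp] at hx'
    refine Submodule.span_le.mpr ?_ hx'
    rintro _ ⟨i, rfl⟩
    rw [Function.comp_apply, homogeneousComponent_of_mem (hb i)]
    split_ifs with h
    · exact Submodule.subset_span ⟨⟨i, h.symm⟩, rfl⟩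
    · exact zero_mem _
  · rintro _ ⟨⟨i, rfl⟩, rfl⟩
    exact hb i

theorem natCard_degree_eq_finrank_of_basis [Nontrivial R]
    (b : Module.Basis ι R (MvPolynomial σ R)) {d : ι → ℕ}
    (hb : ∀ i, (b i).IsHomogeneous (d i)) (e : ℕ) :
    Nat.card {i // d i = e} = Module.finrank R (homogeneousSubmodule σ R e) := by
  rw [homogeneousSubmodule_eq_span_of_basis b hb e]
  exact (Module.finrank_eq_nat_card_basis
    (.span (b.linearIndependent.comp Subtype.val Subtype.val_injective))).symm

theorem finrank_homogeneousSubmodule [Nontrivial R] [Fintype σ] (e : ℕ) :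
    Module.finrank R (homogeneousSubmodule σ R e) = (Fintype.card σ).multichoose e := by
  rw [← natCard_degree_eq_finrank_of_basis (basisMonomials σ R) (d := Finsupp.degree)
    (fun m => by simpa using isHomogeneous_monomial (1 : R) rfl), ← Finset.card_univ,
    ← Finset.card_finsuppAntidiag_nat_eq_multichoose, ← Nat.card_eq_finsetCard]
  exact Nat.card_congr (Equiv.subtypeEquivRight fun m => by simp [Finsupp.degree_eq_sum])

end MvPolynomial

section Cone

variable {K : Type*} [Field K] {N : ℕ}

abbrev ConeIndex (p : ConeTriple N K) : Type := {γ : Fin N →₀ ℕ // γ.support ⊆ p.2.1}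

noncomputable def coneGenerator (p : ConeTriple N K) (γ : ConeIndex p) :
    MvPolynomial (Fin N) K :=
  monomial (p.1 + γ.1) 1 * p.2.2

theorem cone_eq_span_coneGenerator (p : ConeTriple N K) :
    cone p = Submodule.span K (Set.range (coneGenerator p)) := by
  have hsupp (γ : Fin N →₀ ℕ) : γ.support ⊆ p.2.1 ↔ ∀ i ∉ p.2.1, γ i = 0 := by
    rw [← Finset.coe_subset, Finsupp.support_subset_iff]
    rfl
  rw [cone]
  congr 1
  ext q
  simp only [Set.mem_ofPred_eq, Set.mem_range, Subtype.exists, coneGenerator, hsupp, exists_prop]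
  exact exists_congr fun γ => and_congr_right fun _ => eq_comm

theorem linearIndependent_coneGenerator {p : ConeTriple N K} (hp : p.2.2 ≠ 0) :
    LinearIndependent K (coneGenerator p) := by
  have hmon := (basisMonomials (Fin N) K).linearIndependent.comp (fun γ : ConeIndex p => p.1 + γ.1)
    fun γ γ' h => Subtype.ext (add_left_cancel h)
  rw [MvPolynomial.coe_basisMonomials] at hmon
  exact hmon.map' (LinearMap.mulRight K p.2.2)
    (LinearMap.ker_eq_bot.mpr (mul_left_injective₀ hp))

theorem isHomogeneous_coneGenerator {p : ConeTriple N K} {n : ℕ} (hp : p.2.2 ≠ 0)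
    (hh : p.2.2.IsHomogeneous n) (γ : ConeIndex p) :
    (coneGenerator p γ).IsHomogeneous (coneDeg p + γ.1.degree) := by
  have hdeg : coneDeg p + γ.1.degree = (p.1 + γ.1).degree + n := by
    rw [coneDeg.eq_1, ← Finsupp.degree_eq_sum, hh.totalDegree hp, map_add]
    ring
  exact hdeg ▸ (isHomogeneous_monomial (1 : K) rfl).mul hh

noncomputable def coneIndexDegreeEquiv (p : ConeTriple N K) {e : ℕ} (he : coneDeg p ≤ e) :
    {γ : ConeIndex p // coneDeg p + γ.1.degree = e} ≃ p.2.1.finsuppAntidiag (e - coneDeg p) :=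
  (Equiv.subtypeSubtypeEquivSubtypeInter (fun γ : Fin N →₀ ℕ => γ.support ⊆ p.2.1)
    (fun γ => coneDeg p + γ.degree = e)).trans <| Equiv.subtypeEquivRight fun γ => by
    rw [Finset.mem_finsuppAntidiag, and_comm]
    refine and_congr_left fun hsupp => ?_
    have hdeg : γ.degree = p.2.1.sum γ :=
      Finset.sum_subset hsupp fun i _ hi => Finsupp.notMem_support_iff.mp hi
    omega

instance (p : ConeTriple N K) (e : ℕ) :
    Finite {γ : ConeIndex p // coneDeg p + γ.1.degree = e} := by
  by_cases he : coneDeg p ≤ e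
  · exact .of_equiv _ (coneIndexDegreeEquiv p he).symm
  · have : IsEmpty {γ : ConeIndex p // coneDeg p + γ.1.degree = e} :=
      ⟨fun γ => he (γ.2 ▸ Nat.le_add_right _ _)⟩
    infer_instance

theorem natCard_coneIndex_degree (p : ConeTriple N K) (e : ℕ) :
    Nat.card {γ : ConeIndex p // coneDeg p + γ.1.degree = e} =
      if coneDeg p ≤ e then p.2.1.card.multichoose (e - coneDeg p) else 0 := by
  split_ifs with he
  · rw [Nat.card_congr (coneIndexDegreeEquiv p he), Nat.card_eq_finsetCard,
      Finset.card_finsuppAntidiag_nat_eq_multichoose]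
  · exact Nat.card_eq_zero.mpr (.inl ⟨fun γ => he (γ.2 ▸ Nat.le_add_right _ _)⟩)

end Cone

section Decomposition

variable {K : Type*} [Field K] {N : ℕ}

noncomputable def decompGenerator (𝒟 : Finset (ConeTriple N K)) (x : Σ p : 𝒟, ConeIndex p.1) :
    MvPolynomial (Fin N) K :=
  coneGenerator x.1.1 x.2

namespace IsConeDecomp

variable {𝒟 𝒟₁ 𝒟₂ : Finset (ConeTriple N K)} {M M₁ M₂ : Submodule K (MvPolynomial (Fin N) K)}

theorem linearIndependent_decompGenerator (h : IsConeDecomp 𝒟 M) :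
    LinearIndependent K (decompGenerator 𝒟) := by
  refine linearIndependent_iUnion_finite (f := fun p : 𝒟 => coneGenerator p.1)
    (fun p => linearIndependent_coneGenerator (h.1 p.1 p.2).1) fun p t _ hpt => ?_
  simp only [← cone_eq_span_coneGenerator]
  refine (h.2.2.2 p.1 p.2).mono_right (iSup₂_le fun q hq => ?_)
  exact le_iSup₂_of_le (f := fun q (_ : q ∈ 𝒟.erase p.1) => cone q) q.1
    (Finset.mem_erase.mpr ⟨fun hqp => hpt (Subtype.ext hqp ▸ hq), q.2⟩) le_rfl

theorem span_decompGenerator (h : IsConeDecomp 𝒟 M) :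
    Submodule.span K (Set.range (decompGenerator 𝒟)) = M := by
  change Submodule.span K (Set.range fun x : Σ p : 𝒟, ConeIndex p.1 => coneGenerator x.1.1 x.2) = M
  rw [Set.range_sigma_eq_iUnion_range, Submodule.span_iUnion, h.2.2.1, iSup_subtype]
  simp only [← cone_eq_span_coneGenerator]

theorem disjoint_cone_iSup_erase_union (h₁ : IsConeDecomp 𝒟₁ M₁) (h₂ : IsConeDecomp 𝒟₂ M₂)
    (hdisj : Disjoint M₁ M₂) {p : ConeTriple N K} (hp : p ∈ 𝒟₁) :
    Disjoint (cone p) (⨆ q ∈ (𝒟₁ ∪ 𝒟₂).erase p, cone q) := by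
  have hle : (⨆ q ∈ (𝒟₁ ∪ 𝒟₂).erase p, cone q) ≤ (⨆ q ∈ 𝒟₁.erase p, cone q) ⊔ M₂ := by
    refine iSup₂_le fun q hq => ?_
    obtain ⟨hqp, hq⟩ := Finset.mem_erase.mp hq
    rcases Finset.mem_union.mp hq with hq₁ | hq₂
    · exact le_sup_of_le_left (le_iSup₂_of_le q (Finset.mem_erase.mpr ⟨hqp, hq₁⟩) le_rfl)
    · exact le_sup_of_le_right (h₂.2.1 q hq₂)
  have hM₁ : cone p ⊔ (⨆ q ∈ 𝒟₁.erase p, cone q) ≤ M₁ :=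
    sup_le (h₁.2.1 p hp) (iSup₂_le fun q hq => h₁.2.1 q (Finset.mem_of_mem_erase hq))
  exact ((h₁.2.2.2 p hp).disjoint_sup_right_of_disjoint_sup_left
    (hdisj.mono_left hM₁)).mono_right hle

theorem union (h₁ : IsConeDecomp 𝒟₁ M₁) (h₂ : IsConeDecomp 𝒟₂ M₂) (hdisj : Disjoint M₁ M₂) :
    IsConeDecomp (𝒟₁ ∪ 𝒟₂) (M₁ ⊔ M₂) := by
  refine ⟨fun p hp => ?_, fun p hp => ?_, ?_, fun p hp => ?_⟩
  · rcases Finset.mem_union.mp hp with hp | hp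
    exacts [h₁.1 p hp, h₂.1 p hp]
  · rcases Finset.mem_union.mp hp with hp | hp
    exacts [(h₁.2.1 p hp).trans le_sup_left, (h₂.2.1 p hp).trans le_sup_right]
  · rw [Finset.iSup_union, ← h₁.2.2.1, ← h₂.2.2.1]
  · rcases Finset.mem_union.mp hp with hp | hp
    · exact disjoint_cone_iSup_erase_union h₁ h₂ hdisj hp
    · rw [Finset.union_comm]
      exact disjoint_cone_iSup_erase_union h₂ h₁ hdisj.symm hp

theorem multichoose_eq_sum (h : IsConeDecomp 𝒟 ⊤) (e : ℕ) :
    N.multichoose e =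
      ∑ p ∈ 𝒟, if coneDeg p ≤ e then p.2.1.card.multichoose (e - coneDeg p) else 0 := by
  let b := Module.Basis.mk h.linearIndependent_decompGenerator h.span_decompGenerator.ge
  have hb (x : Σ p : 𝒟, ConeIndex p.1) : (b x).IsHomogeneous (coneDeg x.1.1 + x.2.1.degree) := by
    obtain ⟨hne, n, hn⟩ := h.1 x.1.1 x.1.2
    rw [Module.Basis.mk_apply]
    exact isHomogeneous_coneGenerator hne hn x.2
  have hdim := finrank_homogeneousSubmodule (σ := Fin N) (R := K) e
  rw [Fintype.card_fin] at hdim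
  let E : {x : Σ p : 𝒟, ConeIndex p.1 // coneDeg x.1.1 + x.2.1.degree = e} ≃
      Σ p : 𝒟, {γ : ConeIndex p.1 // coneDeg p.1 + γ.1.degree = e} :=
    { toFun := fun x => ⟨x.1.1, x.1.2, x.2⟩
      invFun := fun x => ⟨⟨x.1, x.2.1⟩, x.2.2⟩
      left_inv := fun _ => rfl
      right_inv := fun _ => rfl }
  rw [← hdim, ← natCard_degree_eq_finrank_of_basis b hb, Nat.card_congr E, Nat.card_sigma,
    ← Finset.sum_coe_sort 𝒟]
  exact Finset.sum_congr rfl fun p _ => natCard_coneIndex_degree p.1 e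

end IsConeDecomp

end Decomposition

theorem decompDeg_union {K : Type*} [Field K] {N : ℕ} (𝒟₁ 𝒟₂ : Finset (ConeTriple N K)) :
    decompDeg (𝒟₁ ∪ 𝒟₂) = max (decompDeg 𝒟₁) (decompDeg 𝒟₂) := by
  rw [decompDeg, decompDeg, decompDeg, Finset.image_union, Finset.max_union]

theorem decompDeg_filter_nonempty {K : Type*} [Field K] {N : ℕ} {𝒟 : Finset (ConeTriple N K)}
    (h : ∀ p ∈ 𝒟, p.2.1 = ∅ → ∃ q ∈ 𝒟, q.2.1.Nonempty ∧ coneDeg p < coneDeg q) :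
    decompDeg (𝒟.filter fun p => p.2.1.Nonempty) = decompDeg 𝒟 := by
  refine le_antisymm (Finset.max_mono (Finset.image_subset_image (Finset.filter_subset _ _)))
    (Finset.max_le fun a ha => ?_)
  have hle {q} (hq : q ∈ 𝒟) (hy : q.2.1.Nonempty) :
      (coneDeg q : WithBot ℕ) ≤ decompDeg (𝒟.filter fun p => p.2.1.Nonempty) :=
    Finset.le_max (Finset.mem_image_of_mem _ (Finset.mem_filter.mpr ⟨hq, hy⟩))
  obtain ⟨p, hp, rfl⟩ := Finset.mem_image.mp ha
  rcases p.2.1.eq_empty_or_nonempty with hy | hy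
  · obtain ⟨q, hq, hqy, hlt⟩ := h p hp hy
    exact (WithBot.coe_le_coe.mpr hlt.le).trans (hle hq hqy)
  · exact hle hp hy

theorem max_degree_of_complementary_decompositions_general {K : Type*} [Field K]
    {N : ℕ} (hN : 1 ≤ N)
    (M₁ M₂ : Submodule K (MvPolynomial (Fin N) K))
    (hsum : M₁ ⊔ M₂ = ⊤) (hdisj : Disjoint M₁ M₂)
    (𝒟₁ 𝒟₂ : Finset (ConeTriple N K))
    (h₁ : IsConeDecomp 𝒟₁ M₁) (h₂ : IsConeDecomp 𝒟₂ M₂) :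
    max (decompDeg 𝒟₁) (decompDeg 𝒟₂) =
      max (decompDeg (𝒟₁.filter fun p => p.2.1.Nonempty))
        (decompDeg (𝒟₂.filter fun p => p.2.1.Nonempty)) := by
  have hdec : IsConeDecomp (𝒟₁ ∪ 𝒟₂) ⊤ := hsum ▸ h₁.union h₂ hdisj
  rw [← decompDeg_union, ← decompDeg_union, ← Finset.filter_union]
  refine (decompDeg_filter_nonempty fun p hp hy => ?_).symm
  obtain ⟨q, hq, hqy, hlt⟩ := exists_lt_of_multichoose_eq_sum hN _ (fun p => p.2.1.card) coneDeg
    hdec.multichoose_eq_sum hp (Finset.card_eq_zero.mpr hy)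
  exact ⟨q, hq, Finset.card_pos.mp hqy, hlt⟩

theorem max_degree_of_complementary_decompositions {K : Type*} [Field K]
    {N : ℕ} (hN : 1 ≤ N)
    (M₁ M₂ : Submodule K (MvPolynomial (Fin N) K))
    (hM₁ : IsHomogeneousSubspace M₁) (hM₂ : IsHomogeneousSubspace M₂)
    (hsum : M₁ ⊔ M₂ = ⊤) (hdisj : Disjoint M₁ M₂)
    (𝒟₁ 𝒟₂ : Finset (ConeTriple N K))
    (h₁ : IsConeDecomp 𝒟₁ M₁) (h₂ : IsConeDecomp 𝒟₂ M₂)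
    (d₁ d₂ : ℕ) (hs₁ : IsStandardDecomp d₁ 𝒟₁) (hs₂ : IsStandardDecomp d₂ 𝒟₂) :
    max (decompDeg 𝒟₁) (decompDeg 𝒟₂) =
      max (decompDeg (𝒟₁.filter fun p => p.2.1.Nonempty))
        (decompDeg (𝒟₂.filter fun p => p.2.1.Nonempty)) :=
  max_degree_of_complementary_decompositions_general hN M₁ M₂ hsum hdisj 𝒟₁ 𝒟₂ h₁ h₂
end

section
/- Let M be a homogeneous K-linear subspace of R = K[x₁,…,x_N]. If M admits a d-standard cone decomposition, then for every d′ ≥ d, M admits a d′-standard cone decomposition. -/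
open MvPolynomial
open scoped Classical

/-!
A cone `C(w,y,h)` with `y ≠ ∅` splits as
`C(w,∅,h) ⊕ ⨁_{j ∈ y} C(w + e_j, {i ∈ y | j ≤ i}, h)`,
sorting the monomials `x^γ` by the least variable they involve. Splitting every cone of degree
`d` with `y ≠ ∅` in this way turns a `d`-standard decomposition into a `(d+1)`-standard one: the
new cones with nonempty variable set have degree `d + 1`, the piece for `j = min y` keeps all of
`y`, and the sum stays direct because the `x^m h` are linearly independent and the pieces have
pairwise disjoint exponent sets. Induction on `d'` finishes the proof.
-/

open Finset Function

noncomputable section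

theorem LinearIndependent.supIndep_span_image {R M ι α : Type*} [Semiring R] [AddCommMonoid M]
    [Module R M] {v : ι → M} (hv : LinearIndependent R v) {s : Finset α} {E : α → Set ι}
    (hE : Pairwise (Disjoint on E)) :
    s.SupIndep fun a => Submodule.span R (v '' E a) := by
  intro t _ a _ hat
  rw [Finset.sup_eq_iSup, ← Submodule.span_iUnion₂, ← Set.image_iUnion₂]
  refine hv.disjoint_span_image (Set.disjoint_iUnion₂_right.mpr fun b hb => hE ?_)
  rintro rfl
  exact hat hb

theorem MvPolynomial.linearIndependent_monomial_mul {σ R : Type*} [CommRing R] [IsDomain R]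
    {h : MvPolynomial σ R} (hh : h ≠ 0) :
    LinearIndependent R fun m : σ →₀ ℕ => monomial m 1 * h := by
  have hmul : (fun m : σ →₀ ℕ => monomial m (1 : R) * h)
      = LinearMap.mulRight R h ∘ basisMonomials σ R := by
    funext m
    simp [coe_basisMonomials]
  rw [hmul]
  exact (basisMonomials σ R).linearIndependent.map' _
    (LinearMap.ker_eq_bot.mpr (mul_left_injective₀ hh))

variable {K : Type*} [Field K] {N : ℕ}

def coneExponents (p : ConeTriple N K) : Set (Fin N →₀ ℕ) :=
  (p.1 + ·) '' {γ | ∀ i ∉ p.2.1, γ i = 0}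

theorem cone_eq_span_coneExponents (p : ConeTriple N K) :
    cone p = Submodule.span K ((fun m => monomial m 1 * p.2.2) '' coneExponents p) := by
  rw [coneExponents, Set.image_image, cone]
  congr 1
  ext q
  exact exists_congr fun γ => and_congr_right' eq_comm

def splitPiece (p : ConeTriple N K) : Option (Fin N) → ConeTriple N K
  | none => (p.1, ∅, p.2.2)
  | some j => (p.1 + Finsupp.single j 1, p.2.1.filter (j ≤ ·), p.2.2)

def splitCone (p : ConeTriple N K) : Finset (ConeTriple N K) :=
  (insertNone p.2.1).image (splitPiece p)

theorem splitPiece_snd_snd (p : ConeTriple N K) (o : Option (Fin N)) :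
    (splitPiece p o).2.2 = p.2.2 := by
  cases o <;> rfl

theorem coneDeg_splitPiece_some (p : ConeTriple N K) (j : Fin N) :
    coneDeg (splitPiece p (some j)) = coneDeg p + 1 := by
  simp only [coneDeg, splitPiece, Finsupp.add_apply, sum_add_distrib,
    Finsupp.single_apply, sum_ite_eq, mem_univ, if_true]
  ring

theorem coneExponents_eq_biUnion_splitPiece (p : ConeTriple N K) :
    coneExponents p = ⋃ o ∈ insertNone p.2.1, coneExponents (splitPiece p o) := by
  ext m
  simp only [Set.mem_iUnion, exists_prop]
  constructor
  · rintro ⟨γ, hγ, rfl⟩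
    by_cases hγ0 : γ = 0
    · exact ⟨none, none_mem_insertNone, 0, fun _ _ => rfl, by simp [splitPiece, hγ0]⟩
    have hsupp : γ.support.Nonempty := Finsupp.support_nonempty_iff.mpr hγ0
    set j := γ.support.min' hsupp
    have hγj : γ j ≠ 0 := Finsupp.mem_support_iff.mp (γ.support.min'_mem hsupp)
    have hjy : j ∈ p.2.1 := by_contra fun hj => hγj (hγ j hj)
    refine ⟨some j, some_mem_insertNone.mpr hjy, γ - Finsupp.single j 1, fun i hi => ?_, ?_⟩
    · rcases eq_or_ne i j with rfl | hij
      · exact absurd (mem_filter.mpr ⟨hjy, le_rfl⟩) hi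
      · have hγi : γ i = 0 := by
          by_contra hγi
          exact hi (mem_filter.mpr ⟨by_contra fun h => hγi (hγ i h),
            γ.support.min'_le i (Finsupp.mem_support_iff.mpr hγi)⟩)
        simp [hγi]
    · ext i
      rcases eq_or_ne i j with rfl | hij
      · simp only [splitPiece, Finsupp.add_apply, Finsupp.tsub_apply, Finsupp.single_eq_same]
        omega
      · simp [splitPiece, hij.symm]
  · rintro ⟨(_ | j), ho, γ, hγ, rfl⟩
    · exact ⟨γ, fun i _ => hγ i (notMem_empty i), rfl⟩
    · refine ⟨Finsupp.single j 1 + γ, fun i hi => ?_, (add_assoc _ _ _).symm⟩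
      have hij : i ≠ j := fun h => hi (h ▸ some_mem_insertNone.mp ho)
      simp [hij.symm, hγ i fun h => hi (mem_filter.mp h).1]

theorem eq_of_mem_coneExponents_splitPiece_none {p : ConeTriple N K} {m : Fin N →₀ ℕ}
    (hm : m ∈ coneExponents (splitPiece p none)) : m = p.1 := by
  obtain ⟨γ, hγ, rfl⟩ := hm
  have : γ = 0 := Finsupp.ext fun i => hγ i (notMem_empty i)
  simp [splitPiece, this]

theorem mem_coneExponents_splitPiece_some {p : ConeTriple N K} {j : Fin N} {m : Fin N →₀ ℕ}
    (hm : m ∈ coneExponents (splitPiece p (some j))) :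
    p.1 j < m j ∧ ∀ i < j, m i = p.1 i := by
  obtain ⟨γ, hγ, rfl⟩ := hm
  refine ⟨by simp [splitPiece]; omega, fun i hij => ?_⟩
  have hγi : γ i = 0 := hγ i fun hi => (mem_filter.mp hi).2.not_gt hij
  simp [splitPiece, hij.ne', hγi]

theorem pairwise_disjoint_coneExponents_splitPiece (p : ConeTriple N K) :
    Pairwise (Disjoint on fun o => coneExponents (splitPiece p o)) := by
  rintro (_ | j) (_ | j') hne <;> rw [onFun, Set.disjoint_left] <;> intro m hm hm'
  · exact hne rfl
  · have := (mem_coneExponents_splitPiece_some hm').1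
    rw [eq_of_mem_coneExponents_splitPiece_none hm] at this
    exact this.false
  · have := (mem_coneExponents_splitPiece_some hm).1
    rw [eq_of_mem_coneExponents_splitPiece_none hm'] at this
    exact this.false
  · have h := mem_coneExponents_splitPiece_some hm
    have h' := mem_coneExponents_splitPiece_some hm'
    rcases lt_trichotomy j j' with hlt | rfl | hgt
    · exact (h'.2 j hlt ▸ h.1).false
    · exact hne rfl
    · exact (h.2 j' hgt ▸ h'.1).false


variable {d : ℕ} {𝒟 : Finset (ConeTriple N K)} {M : Submodule K (MvPolynomial (Fin N) K)}

theorem isConeDecomp_iff :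
    IsConeDecomp 𝒟 M ↔ (∀ p ∈ 𝒟, p.2.2 ≠ 0 ∧ ∃ e, p.2.2.IsHomogeneous e) ∧
      (∀ p ∈ 𝒟, cone p ≤ M) ∧ M = 𝒟.sup cone ∧ 𝒟.SupIndep cone := by
  simp only [IsConeDecomp, Finset.sup_eq_iSup, supIndep_iff_disjoint_erase]

theorem IsConeDecomp.biUnion {g : ConeTriple N K → Finset (ConeTriple N K)}
    (h𝒟 : IsConeDecomp 𝒟 M) (hg : ∀ p ∈ 𝒟, IsConeDecomp (g p) (cone p)) :
    IsConeDecomp (𝒟.biUnion g) M := by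
  simp only [isConeDecomp_iff] at h𝒟 hg ⊢
  obtain ⟨-, hle, hsup, hind⟩ := h𝒟
  have hcone : ∀ p ∈ 𝒟, (g p).sup cone = cone p := fun p hp => (hg p hp).2.2.1.symm
  refine ⟨fun q hq => ?_, fun q hq => ?_, ?_, ?_⟩
  · obtain ⟨p, hp, hq⟩ := mem_biUnion.mp hq
    exact (hg p hp).1 q hq
  · obtain ⟨p, hp, hq⟩ := mem_biUnion.mp hq
    exact ((hg p hp).2.1 q hq).trans (hle p hp)
  · rw [sup_biUnion, hsup]
    exact sup_congr rfl fun p hp => (hcone p hp).symm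
  · refine SupIndep.biUnion ?_ fun p hp => (hg p hp).2.2.2
    intro t ht p hp hpt
    beta_reduce
    rw [hcone p hp, sup_congr rfl fun q hq => hcone q (ht hq)]
    exact hind ht hp hpt

theorem isConeDecomp_singleton {p : ConeTriple N K}
    (hp : p.2.2 ≠ 0 ∧ ∃ e, p.2.2.IsHomogeneous e) : IsConeDecomp {p} (cone p) := by
  simp [isConeDecomp_iff, hp, supIndep_singleton]

theorem isConeDecomp_splitCone {p : ConeTriple N K}
    (hp : p.2.2 ≠ 0 ∧ ∃ e, p.2.2.IsHomogeneous e) : IsConeDecomp (splitCone p) (cone p) := by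
  set v : (Fin N →₀ ℕ) → MvPolynomial (Fin N) K := fun m => monomial m 1 * p.2.2
  have hspan : cone ∘ splitPiece p =
      fun o => Submodule.span K (v '' coneExponents (splitPiece p o)) := by
    funext o
    rw [comp_apply, cone_eq_span_coneExponents, splitPiece_snd_snd]
  have hsup : cone p = (insertNone p.2.1).sup (cone ∘ splitPiece p) := by
    rw [cone_eq_span_coneExponents, coneExponents_eq_biUnion_splitPiece, Set.image_iUnion₂,
      Submodule.span_iUnion₂, Finset.sup_eq_iSup, hspan]
  rw [isConeDecomp_iff, splitCone, sup_image, ← hsup]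
  refine ⟨?_, ?_, rfl, SupIndep.image ?_⟩
  · simp only [mem_image]
    rintro _ ⟨o, -, rfl⟩
    rw [splitPiece_snd_snd]
    exact hp
  · simp only [mem_image]
    rintro _ ⟨o, ho, rfl⟩
    exact hsup ▸ le_sup (f := cone ∘ splitPiece p) ho
  · rw [hspan]
    exact (linearIndependent_monomial_mul hp.1).supIndep_span_image
      (pairwise_disjoint_coneExponents_splitPiece p)

def raiseDecomp (d : ℕ) (𝒟 : Finset (ConeTriple N K)) : Finset (ConeTriple N K) :=
  𝒟.biUnion fun p => if p.2.1.Nonempty ∧ coneDeg p = d then splitCone p else {p}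

theorem IsConeDecomp.raiseDecomp (h𝒟 : IsConeDecomp 𝒟 M) (d : ℕ) :
    IsConeDecomp (raiseDecomp d 𝒟) M := by
  refine h𝒟.biUnion fun p hp => ?_
  split_ifs
  · exact isConeDecomp_splitCone (h𝒟.1 p hp)
  · exact isConeDecomp_singleton (h𝒟.1 p hp)

theorem mem_raiseDecomp_of_coneDeg_ne {p : ConeTriple N K} (hp : p ∈ 𝒟)
    (hd : coneDeg p ≠ d) :
    p ∈ raiseDecomp d 𝒟 :=
  mem_biUnion.mpr ⟨p, hp, by simp [hd]⟩

theorem exists_mem_raiseDecomp_of_coneDeg_eq {p : ConeTriple N K} (hp : p ∈ 𝒟)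
    (hy : p.2.1.Nonempty) (hd : coneDeg p = d) :
    ∃ q ∈ raiseDecomp d 𝒟, q.2.1 = p.2.1 ∧ coneDeg q = d + 1 := by
  refine ⟨splitPiece p (some (p.2.1.min' hy)), mem_biUnion.mpr ⟨p, hp, ?_⟩, ?_, ?_⟩
  · rw [if_pos ⟨hy, hd⟩]
    exact mem_image_of_mem _ (some_mem_insertNone.mpr (p.2.1.min'_mem hy))
  · exact filter_true_of_mem fun i hi => p.2.1.min'_le i hi
  · rw [coneDeg_splitPiece_some, hd]

theorem mem_raiseDecomp_of_nonempty {q : ConeTriple N K} (hq : q ∈ raiseDecomp d 𝒟)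
    (hy : q.2.1.Nonempty) :
    (q ∈ 𝒟 ∧ coneDeg q ≠ d) ∨ (coneDeg q = d + 1 ∧
      ∃ p ∈ 𝒟, p.2.1.Nonempty ∧ coneDeg p = d ∧ q.2.1.card ≤ p.2.1.card) := by
  obtain ⟨p, hp, hq⟩ := mem_biUnion.mp hq
  split_ifs at hq with hsplit
  · obtain ⟨_ | j, -, rfl⟩ := mem_image.mp hq
    · exact absurd hy not_nonempty_empty
    · exact .inr ⟨by rw [coneDeg_splitPiece_some, hsplit.2], p, hp, hsplit.1, hsplit.2,
        card_filter_le _ _⟩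
  · rw [mem_singleton.mp hq]
    exact .inl ⟨hp, fun hd => hsplit ⟨mem_singleton.mp hq ▸ hy, hd⟩⟩

theorem IsStandardDecomp.raiseDecomp (h𝒟 : IsStandardDecomp d 𝒟) :
    IsStandardDecomp (d + 1) (raiseDecomp d 𝒟) := by
  obtain ⟨hdeg, hgap⟩ := h𝒟
  refine ⟨fun q hq hy => ?_, fun q hq hy d' hd' hd'q => ?_⟩
  · rcases mem_raiseDecomp_of_nonempty hq hy with ⟨hq, hne⟩ | ⟨hdq, -⟩
    · exact lt_of_le_of_ne (hdeg q hq hy) hne.symm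
    · exact hdq.ge
  · rcases mem_raiseDecomp_of_nonempty hq hy with ⟨hq, -⟩ | ⟨hdq, p, hp, hpy, hdp, hcard⟩
    · obtain ⟨r, hr, hry, hrd, hcard⟩ := hgap q hq hy d' (by omega) hd'q
      exact ⟨r, mem_raiseDecomp_of_coneDeg_ne hr (by omega), hry, hrd, hcard⟩
    · obtain ⟨r, hr, hry, hrd⟩ := exists_mem_raiseDecomp_of_coneDeg_eq hp hpy hdp
      exact ⟨r, hr, hry ▸ hpy, by omega, hry ▸ hcard⟩

end

theorem standard_decomposition_shift_general {K : Type*} [Field K]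
    {N : ℕ} (M : Submodule K (MvPolynomial (Fin N) K))
    (d : ℕ) (𝒟 : Finset (ConeTriple N K))
    (hdec : IsConeDecomp 𝒟 M) (hstd : IsStandardDecomp d 𝒟) :
    ∀ d' : ℕ, d ≤ d' → ∃ 𝒟' : Finset (ConeTriple N K),
      IsConeDecomp 𝒟' M ∧ IsStandardDecomp d' 𝒟' := by
  intro d' hd'
  induction d', hd' using Nat.le_induction with
  | base => exact ⟨𝒟, hdec, hstd⟩
  | succ n _ ih =>
    obtain ⟨𝒟', hdec', hstd'⟩ := ih
    exact ⟨raiseDecomp n 𝒟', hdec'.raiseDecomp n, hstd'.raiseDecomp⟩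

theorem standard_decomposition_shift {K : Type*} [Field K]
    {N : ℕ} (hN : 1 ≤ N) (M : Submodule K (MvPolynomial (Fin N) K))
    (hM : IsHomogeneousSubspace M)
    (d : ℕ) (𝒟 : Finset (ConeTriple N K))
    (hdec : IsConeDecomp 𝒟 M) (hstd : IsStandardDecomp d 𝒟) :
    ∀ d' : ℕ, d ≤ d' → ∃ 𝒟' : Finset (ConeTriple N K),
      IsConeDecomp 𝒟' M ∧ IsStandardDecomp d' 𝒟' :=
  standard_decomposition_shift_general M d 𝒟 hdec hstd
end

section
/- Let 𝒟 be an exact cone decomposition of a homogeneous K-linear subspace of R = K[x₁,…,x_N], with Macaulay constants b₀ ≥ b₁ ≥ ⋯ ≥ b_{N+1}. Then for each i = 1,…,N and each integer e with b_{i+1} ≤ e < b_i there is exactly one triple (w,y,h) ∈ 𝒟⁺ with |w| + deg(h) = e, and for this triple #y = i. -/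
open MvPolynomial
open scoped Classical

/-- `𝒟` is exact: it is `d`-standard for some `d`, and for each degree at most one
triple `(w,y,h) ∈ 𝒟⁺` has `|w| + deg h` equal to that degree. -/
def IsExactDecomp {N : ℕ} {K : Type*} [Field K] (𝒟 : Finset (ConeTriple N K)) : Prop :=
  (∃ d, IsStandardDecomp d 𝒟) ∧
  ∀ p ∈ 𝒟, ∀ q ∈ 𝒟, p.2.1.Nonempty → q.2.1.Nonempty → coneDeg p = coneDeg q → p = q

/-- `d_𝒟`: the least `d` such that `𝒟` is `d`-standard. -/
noncomputable def dMin {N : ℕ} {K : Type*} [Field K]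
    (𝒟 : Finset (ConeTriple N K)) : ℕ :=
  sInf {d | IsStandardDecomp d 𝒟}

/-- The Macaulay constant `b_i = max {d_𝒟, 1 + deg 𝒟_i}` of `𝒟`, where
`𝒟_i = {(w,y,h) ∈ 𝒟 : #y ≥ i}` (and `b_i = d_𝒟` when `𝒟_i = ∅`). -/
noncomputable def macaulay {N : ℕ} {K : Type*} [Field K]
    (𝒟 : Finset (ConeTriple N K)) (i : ℕ) : ℕ :=
  if (𝒟.filter fun p => i ≤ p.2.1.card).Nonempty then
    max (dMin 𝒟) (1 + (𝒟.filter fun p => i ≤ p.2.1.card).sup coneDeg)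
  else dMin 𝒟

/-!
Some cone with `#y ≥ i` reaches degree `b_i - 1`, so `d_𝒟`-standardness yields, in every
degree `e` with `d_𝒟 ≤ e < b_i`, a cone with `#y ≥ i`; when `e ≥ b_{i+1}` that cone cannot
have `#y > i`, and exactness makes it the only cone of degree `e` in `𝒟⁺`.
-/

section Macaulay

variable {N : ℕ} {K : Type*} [Field K] {𝒟 : Finset (ConeTriple N K)}

theorem isStandardDecomp_dMin (h : ∃ d, IsStandardDecomp d 𝒟) :
    IsStandardDecomp (dMin 𝒟) 𝒟 :=
  Nat.sInf_mem h

theorem dMin_le_macaulay (i : ℕ) : dMin 𝒟 ≤ macaulay 𝒟 i := by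
  unfold macaulay
  split
  · exact le_max_left _ _
  · exact le_rfl

theorem coneDeg_lt_macaulay {i : ℕ} {p : ConeTriple N K} (hp : p ∈ 𝒟)
    (hi : i ≤ p.2.1.card) : coneDeg p < macaulay 𝒟 i := by
  have hmem : p ∈ 𝒟.filter fun q => i ≤ q.2.1.card := Finset.mem_filter.mpr ⟨hp, hi⟩
  have hsup := Finset.le_sup (f := coneDeg) hmem
  unfold macaulay
  rw [if_pos ⟨p, hmem⟩]
  omega

theorem card_le_of_macaulay_succ_le {i : ℕ} {p : ConeTriple N K} (hp : p ∈ 𝒟)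
    (h : macaulay 𝒟 (i + 1) ≤ coneDeg p) : p.2.1.card ≤ i := by
  by_contra! hlt
  exact (coneDeg_lt_macaulay hp hlt).not_ge h

theorem exists_le_coneDeg_of_lt_macaulay {i e : ℕ} (hde : dMin 𝒟 ≤ e)
    (he : e < macaulay 𝒟 i) : ∃ p ∈ 𝒟, i ≤ p.2.1.card ∧ e ≤ coneDeg p := by
  unfold macaulay at he
  split at he
  case isFalse => omega
  case isTrue hne =>
    obtain ⟨p, hp, hsup⟩ := Finset.exists_mem_eq_sup _ hne coneDeg
    obtain ⟨hpD, hpi⟩ := Finset.mem_filter.mp hp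
    exact ⟨p, hpD, hpi, by omega⟩

theorem exists_coneDeg_eq_of_lt_macaulay (hstd : ∃ d, IsStandardDecomp d 𝒟)
    {i e : ℕ} (hi : 1 ≤ i) (hde : dMin 𝒟 ≤ e) (he : e < macaulay 𝒟 i) :
    ∃ q ∈ 𝒟, q.2.1.Nonempty ∧ coneDeg q = e ∧ i ≤ q.2.1.card := by
  obtain ⟨p, hpD, hpi, hep⟩ := exists_le_coneDeg_of_lt_macaulay hde he
  have hpne : p.2.1.Nonempty := Finset.card_pos.mp (by omega)
  obtain ⟨q, hqD, hqne, hqe, hpq⟩ := (isStandardDecomp_dMin hstd).2 p hpD hpne e hde hep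
  exact ⟨q, hqD, hqne, hqe, hpi.trans hpq⟩

end Macaulay

theorem exact_decomposition_rigidity_general {K : Type*} [Field K]
    {N : ℕ}
    (𝒟 : Finset (ConeTriple N K))
    (hex : IsExactDecomp 𝒟) :
    ∀ i : ℕ, 1 ≤ i → i ≤ N → ∀ e : ℕ,
      macaulay 𝒟 (i + 1) ≤ e → e < macaulay 𝒟 i →
      (∃! p : ConeTriple N K, p ∈ 𝒟 ∧ p.2.1.Nonempty ∧ coneDeg p = e) ∧
      ∀ p ∈ 𝒟, p.2.1.Nonempty → coneDeg p = e → p.2.1.card = i := by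
  intro i hi _ e he₁ he₂
  obtain ⟨hstd, huniq⟩ := hex
  obtain ⟨q, hqD, hqne, hqe, hiq⟩ := exists_coneDeg_eq_of_lt_macaulay hstd hi
    ((dMin_le_macaulay (i + 1)).trans he₁) he₂
  have hqi : q.2.1.card ≤ i := card_le_of_macaulay_succ_le hqD (hqe ▸ he₁)
  have eq_q : ∀ p ∈ 𝒟, p.2.1.Nonempty → coneDeg p = e → p = q :=
    fun p hpD hpne hpe => huniq p hpD q hqD hpne hqne (hpe.trans hqe.symm)
  refine ⟨⟨q, ⟨hqD, hqne, hqe⟩, fun p ⟨hpD, hpne, hpe⟩ => eq_q p hpD hpne hpe⟩, ?_⟩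
  intro p hpD hpne hpe
  rw [eq_q p hpD hpne hpe]
  omega

theorem exact_decomposition_rigidity {K : Type*} [Field K]
    {N : ℕ} (hN : 1 ≤ N) (M : Submodule K (MvPolynomial (Fin N) K))
    (hM : IsHomogeneousSubspace M)
    (𝒟 : Finset (ConeTriple N K))
    (hdec : IsConeDecomp 𝒟 M) (hex : IsExactDecomp 𝒟) :
    ∀ i : ℕ, 1 ≤ i → i ≤ N → ∀ e : ℕ,
      macaulay 𝒟 (i + 1) ≤ e → e < macaulay 𝒟 i →
      (∃! p : ConeTriple N K, p ∈ 𝒟 ∧ p.2.1.Nonempty ∧ coneDeg p = e) ∧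
      ∀ p ∈ 𝒟, p.2.1.Nonempty → coneDeg p = e → p.2.1.card = i :=
  exact_decomposition_rigidity_general 𝒟 hex
end
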